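/- Let n ≥ 1. For s ∈ F₂ⁿ, let P_s be the permutation matrix on ℂ^{F₂ⁿ} given by (P_s)_{x,y} = [y = x + s], and define the coset state ρ_s := 2^{−n}(I + P_s). Then for every nonzero s, ρ_s is a positive semidefinite matrix with trace 1, and for all nonzero s, s' ∈ F₂ⁿ: tr(ρ_s ρ_{s'}) = 2^{−n} if s ≠ s', while tr(ρ_s ρ_s) = 2^{1−n}. Equivalently, with σ = 2^{−n} I and ρ̂_s := ρ_s σ^{−1} − I, one has tr(ρ̂_s ρ̂_{s'} σ) = [s = s'] for all nonzero s, s'. -/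

import Mathlib

/-! Writing `ρ_s = 2⁻ⁿ (1 + P_s)`, everything reduces to two facts about translation matrices:
`P_s P_t = P_{s+t}`, and `tr P_s` is `2ⁿ` for `s = 0` and `0` otherwise. Since `s + t = 0` iff
`s = t` in characteristic two, `tr (P_s P_t) = 2ⁿ [s = t]`. Positivity holds because `P_s` is a
Hermitian involution, which makes `1 + P_s = ½ (1 + P_s)ᴴ (1 + P_s)`. -/

open Matrix
open scoped ComplexOrder

/-- The permutation matrix of translation by `s` on `F₂ⁿ`: `(P_s)_{x,y} = [y = x + s]`. -/
def translationMatrix (n : ℕ) (s : Fin n → ZMod 2) :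
    Matrix (Fin n → ZMod 2) (Fin n → ZMod 2) ℂ :=
  Matrix.of fun x y => if y = x + s then 1 else 0

/-- The coset state `ρ_s = 2^{-n}(I + P_s)` of the hidden subgroup `{0, s} ≤ ℤ₂ⁿ`. -/
noncomputable def cosetState (n : ℕ) (s : Fin n → ZMod 2) :
    Matrix (Fin n → ZMod 2) (Fin n → ZMod 2) ℂ :=
  ((2 : ℂ) ^ n)⁻¹ • (1 + translationMatrix n s)

lemma neg_eq_self_of_zmod_two {ι : Type*} (t : ι → ZMod 2) : -t = t :=
  funext fun i => ZMod.neg_eq_self_mod_two (t i)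

lemma add_eq_zero_iff_eq_of_zmod_two {ι : Type*} {s t : ι → ZMod 2} : s + t = 0 ↔ s = t := by
  rw [add_eq_zero_iff_eq_neg, neg_eq_self_of_zmod_two]

section translationMatrix

variable (n : ℕ)

lemma translationMatrix_zero : translationMatrix n 0 = 1 := by
  ext x y
  simp [translationMatrix, Matrix.one_apply, eq_comm]

lemma translationMatrix_mul (s t : Fin n → ZMod 2) :
    translationMatrix n s * translationMatrix n t = translationMatrix n (s + t) := by
  ext x y
  simp only [translationMatrix, mul_apply, of_apply, ite_mul, one_mul, zero_mul,
    Finset.sum_ite_eq', Finset.mem_univ, if_true, add_assoc]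

lemma translationMatrix_mul_self (s : Fin n → ZMod 2) :
    translationMatrix n s * translationMatrix n s = 1 := by
  rw [translationMatrix_mul, add_eq_zero_iff_eq_of_zmod_two.2 rfl, translationMatrix_zero]

lemma isHermitian_translationMatrix (s : Fin n → ZMod 2) :
    (translationMatrix n s).IsHermitian := by
  ext x y
  have hsymm : x = y + s ↔ y = x + s := by
    rw [eq_comm, ← sub_eq_iff_eq_add, sub_eq_add_neg, neg_eq_self_of_zmod_two]
  simp [translationMatrix, hsymm]

lemma trace_translationMatrix (s : Fin n → ZMod 2) :
    (translationMatrix n s).trace = if s = 0 then (2 : ℂ) ^ n else 0 := by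
  have hfix : ∀ x : Fin n → ZMod 2, x = x + s ↔ s = 0 := fun x => by
    rw [eq_comm, add_eq_left]
  simp [Matrix.trace, translationMatrix, hfix]

lemma trace_translationMatrix_mul (s t : Fin n → ZMod 2) :
    (translationMatrix n s * translationMatrix n t).trace = if s = t then (2 : ℂ) ^ n else 0 := by
  simp only [translationMatrix_mul, trace_translationMatrix, add_eq_zero_iff_eq_of_zmod_two]

end translationMatrix

section cosetState

variable {n : ℕ}

lemma smul_cosetState_sub_one (s : Fin n → ZMod 2) :
    (2 : ℂ) ^ n • cosetState n s - 1 = translationMatrix n s := by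
  rw [cosetState, smul_smul, mul_inv_cancel₀ (by positivity), one_smul, add_sub_cancel_left]

lemma cosetState_posSemidef (s : Fin n → ZMod 2) : (cosetState n s).PosSemidef := by
  set P := translationMatrix n s
  have hsquare : (1 + P)ᴴ * (1 + P) = (2 : ℂ) • (1 + P) := by
    rw [conjTranspose_add, conjTranspose_one, (isHermitian_translationMatrix n s).eq, add_mul,
      mul_add, mul_add, translationMatrix_mul_self, two_smul]
    noncomm_ring
  have hρ : cosetState n s = ((2 : ℂ) ^ (n + 1))⁻¹ • ((1 + P)ᴴ * (1 + P)) := by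
    rw [hsquare, smul_smul, pow_succ, mul_inv, inv_mul_cancel_right₀ two_ne_zero, cosetState]
  rw [hρ]
  exact (posSemidef_conjTranspose_mul_self _).smul (by positivity)

lemma trace_cosetState {s : Fin n → ZMod 2} (hs : s ≠ 0) : (cosetState n s).trace = 1 := by
  rw [cosetState, trace_smul, trace_add, trace_one, trace_translationMatrix, if_neg hs]
  simp

lemma trace_cosetState_mul {s t : Fin n → ZMod 2} (hs : s ≠ 0) (ht : t ≠ 0) :
    (cosetState n s * cosetState n t).trace
      = if s = t then 2 / (2 : ℂ) ^ n else 1 / (2 : ℂ) ^ n := by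
  have hexpand : cosetState n s * cosetState n t = ((2 : ℂ) ^ n)⁻¹ ^ 2 •
      (1 + translationMatrix n s + translationMatrix n t
        + translationMatrix n s * translationMatrix n t) := by
    rw [cosetState, cosetState, smul_mul_smul_comm, ← sq, add_mul, mul_add, mul_add, one_mul,
      mul_one, one_mul]
    congr 1
    abel
  rw [hexpand, trace_smul, trace_add, trace_add, trace_add, trace_one,
    trace_translationMatrix, trace_translationMatrix, trace_translationMatrix_mul,
    if_neg hs, if_neg ht]
  simp only [Fintype.card_fun, ZMod.card, Fintype.card_fin, Nat.cast_pow, Nat.cast_ofNat,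
    smul_eq_mul, add_zero]
  split_ifs <;> field_simp <;> ring

lemma trace_correlation (s t : Fin n → ZMod 2) :
    (((2 : ℂ) ^ n • cosetState n s - 1) * ((2 : ℂ) ^ n • cosetState n t - 1)
        * ((2 : ℂ) ^ n)⁻¹ • (1 : Matrix (Fin n → ZMod 2) (Fin n → ZMod 2) ℂ)).trace
      = if s = t then 1 else 0 := by
  rw [smul_cosetState_sub_one, smul_cosetState_sub_one, mul_smul_comm, mul_one, trace_smul,
    trace_translationMatrix_mul]
  split_ifs
  · exact inv_mul_cancel₀ (by positivity)
  · exact smul_zero _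

end cosetState

theorem cosetState_correlation_general (n : ℕ) :
    (∀ s : Fin n → ZMod 2, s ≠ 0 →
      (cosetState n s).PosSemidef ∧ (cosetState n s).trace = 1) ∧
    (∀ s s' : Fin n → ZMod 2, s ≠ 0 → s' ≠ 0 →
      (cosetState n s * cosetState n s').trace
        = if s = s' then 2 / (2 : ℂ) ^ n else 1 / (2 : ℂ) ^ n) ∧
    (∀ s s' : Fin n → ZMod 2, s ≠ 0 → s' ≠ 0 →
      ((((2 : ℂ) ^ n) • cosetState n s - 1) * (((2 : ℂ) ^ n) • cosetState n s' - 1)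
          * (((2 : ℂ) ^ n)⁻¹ • (1 : Matrix (Fin n → ZMod 2) (Fin n → ZMod 2) ℂ))).trace
        = if s = s' then 1 else 0) :=
  ⟨fun s hs => ⟨cosetState_posSemidef s, trace_cosetState hs⟩,
    fun _ _ hs hs' => trace_cosetState_mul hs hs',
    fun s s' _ _ => trace_correlation s s'⟩

/-- Average-correlation computation for Simon coset states: for nonzero `s`, `ρ_s` is a
density matrix, `tr(ρ_s ρ_{s'})` equals `2^{1-n}` if `s = s'` and `2^{-n}` otherwise;
equivalently, with `σ = 2^{-n} I` and `ρ̂_s = ρ_s σ⁻¹ - I = 2ⁿ ρ_s - I`, one has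
`tr(ρ̂_s ρ̂_{s'} σ) = [s = s']`. -/
theorem cosetState_correlation (n : ℕ) (hn : 1 ≤ n) :
    (∀ s : Fin n → ZMod 2, s ≠ 0 →
      (cosetState n s).PosSemidef ∧ (cosetState n s).trace = 1) ∧
    (∀ s s' : Fin n → ZMod 2, s ≠ 0 → s' ≠ 0 →
      (cosetState n s * cosetState n s').trace
        = if s = s' then 2 / (2 : ℂ) ^ n else 1 / (2 : ℂ) ^ n) ∧
    (∀ s s' : Fin n → ZMod 2, s ≠ 0 → s' ≠ 0 →
      ((((2 : ℂ) ^ n) • cosetState n s - 1) * (((2 : ℂ) ^ n) • cosetState n s' - 1)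
          * (((2 : ℂ) ^ n)⁻¹ • (1 : Matrix (Fin n → ZMod 2) (Fin n → ZMod 2) ℂ))).trace
        = if s = s' then 1 else 0) :=
  cosetState_correlation_general n
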